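/- arXiv:1002.3710 — 3 statements merged into one kernel-verified Lean document; each statement's English description precedes it below -/
import Mathlib

section
/- Let $G$ be a connected bipartite graph with a distinguished vertex $*$. Suppose every odd-distance vertex $b$ from $*$ has an even-distance vertex $\tau$ adjacent to $b$ and to no other vertex (i.e. $\tau$ has degree 1 with its unique neighbor equal to $b$). If some vertex of $G$ has degree at least 3, then the distance from $*$ to the nearest vertex of degree at least 3 is at most 3. -/
open SimpleGraph

private lemma walk_prefix {V : Type*} {G : SimpleGraph V} :
    ∀ {u v : V} (p : G.Walk u v) (i : ℕ), i ≤ p.length →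
      ∃ q : G.Walk u (p.getVert i), q.length = i := by
  intro u v p
  induction p with
  | nil => intro i hi; simp at hi; subst hi; exact ⟨.nil, rfl⟩
  | cons h p ih =>
    intro i hi
    cases i with
    | zero => exact ⟨.nil, rfl⟩
    | succ n =>
      obtain ⟨q, hq⟩ := ih n (by simpa using hi)
      exact ⟨.cons h q, by simp [hq]⟩

private lemma walk_suffix {V : Type*} {G : SimpleGraph V} :
    ∀ {u v : V} (p : G.Walk u v) (i : ℕ), i ≤ p.length →
      ∃ q : G.Walk (p.getVert i) v, q.length = p.length - i := by
  intro u v p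
  induction p with
  | nil => intro i hi; simp at hi; subst hi; exact ⟨.nil, rfl⟩
  | cons h p ih =>
    intro i hi
    cases i with
    | zero =>
      exact ⟨(Walk.cons h p).copy (Walk.getVert_zero _).symm rfl, by simp⟩
    | succ n =>
      obtain ⟨q, hq⟩ := ih n (by simpa using hi)
      exact ⟨q, by simpa using hq⟩

private lemma dist_getVert {V : Type*} {G : SimpleGraph V} {s v : V}
    (hconn : G.Connected) (p : G.Walk s v) (hp : p.length = G.dist s v)
    (i : ℕ) (hi : i ≤ p.length) :
    G.dist s (p.getVert i) = i := by
  obtain ⟨q, hq⟩ := walk_prefix p i hi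
  obtain ⟨r, hr⟩ := walk_suffix p i hi
  have h1 := SimpleGraph.dist_le q
  have h2 := SimpleGraph.dist_le r
  rw [hq] at h1
  rw [hr] at h2
  have h3 := hconn.dist_triangle (u := s) (v := p.getVert i) (w := v)
  omega

/-- Let `G` be a connected bipartite graph with base vertex `s` (bipartiteness
expressed as: adjacent vertices have distances from `s` of opposite parity).
If every odd-distance vertex `b` admits an even-distance vertex `τ` whose only
neighbor is `b`, and some vertex has degree `≥ 3`, then some vertex of degree
`≥ 3` is at distance `≤ 3` from `s`. -/
theorem stmt_8 {V : Type*} [Fintype V] (G : SimpleGraph V) [DecidableRel G.Adj]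
    (hconn : G.Connected) (s : V)
    (hbip : ∀ u v, G.Adj u v → (Even (G.dist s u) ↔ Odd (G.dist s v)))
    (hprop : ∀ b, Odd (G.dist s b) →
      ∃ τ, Even (G.dist s τ) ∧ G.Adj τ b ∧ ∀ c, G.Adj τ c → c = b)
    (hbranch : ∃ v, 3 ≤ G.degree v) :
    ∃ v, 3 ≤ G.degree v ∧ G.dist s v ≤ 3 := by
  classical
  obtain ⟨v, hv⟩ := hbranch
  by_cases hle : G.dist s v ≤ 3
  · exact ⟨v, hv, hle⟩
  push_neg at hle
  obtain ⟨p, hp⟩ := hconn.exists_walk_length_eq_dist s v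
  have hlen : 4 ≤ p.length := by omega
  set b := p.getVert 3 with hb
  have hdb : G.dist s b = 3 := dist_getVert hconn p hp 3 (by omega)
  obtain ⟨τ, hτeven, hτadj, hτuniq⟩ := hprop b (by rw [hdb]; exact ⟨1, rfl⟩)
  set p1 := p.getVert 1 with hp1
  set p2 := p.getVert 2 with hp2
  set q := p.getVert 4 with hq
  have hd1 : G.dist s p1 = 1 := dist_getVert hconn p hp 1 (by omega)
  have hd2 : G.dist s p2 = 2 := dist_getVert hconn p hp 2 (by omega)
  have hd4 : G.dist s q = 4 := dist_getVert hconn p hp 4 (by omega)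
  have hadj12 : G.Adj p1 p2 := p.adj_getVert_succ (by omega)
  have hadj2b : G.Adj p2 b := p.adj_getVert_succ (by omega)
  have hadjbq : G.Adj b q := p.adj_getVert_succ (by omega)
  -- q has a neighbor other than b
  have hqw : ∃ w, G.Adj q w ∧ w ≠ b := by
    rcases eq_or_lt_of_le hlen with h4 | h5
    · have hqv : q = v := by
        rw [hq, show (4:ℕ) = p.length from h4]; exact p.getVert_length
      by_contra hcon
      push_neg at hcon
      have hsub : G.neighborFinset q ⊆ {b} := by
        intro w hw
        simp only [mem_neighborFinset] at hw
        simp [hcon w hw]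
      have hq1 : G.degree q ≤ 1 := by
        rw [← G.card_neighborFinset_eq_degree]
        simpa using Finset.card_le_card hsub
      rw [hqv] at hq1
      omega
    · refine ⟨p.getVert 5, p.adj_getVert_succ (by omega), ?_⟩
      intro hcon
      have := dist_getVert hconn p hp 5 (by omega)
      rw [hcon, hdb] at this
      omega
  obtain ⟨w, hqwadj, hwb⟩ := hqw
  have hτp2 : τ ≠ p2 := by
    intro h
    have := hτuniq p1 (h ▸ hadj12.symm)
    rw [this, hdb] at hd1
    omega
  have hτq : τ ≠ q := by
    intro h
    exact hwb (hτuniq w (h ▸ hqwadj))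
  have hp2q : p2 ≠ q := by intro h; rw [h, hd4] at hd2; omega
  refine ⟨b, ?_, by omega⟩
  rw [← G.card_neighborFinset_eq_degree]
  have hsub : ({τ, p2, q} : Finset V) ⊆ G.neighborFinset b := by
    intro x hx
    simp only [Finset.mem_insert, Finset.mem_singleton] at hx
    rcases hx with rfl | rfl | rfl
    · exact (mem_neighborFinset _ _ _).2 hτadj.symm
    · exact (mem_neighborFinset _ _ _).2 hadj2b.symm
    · exact (mem_neighborFinset _ _ _).2 hadjbq
  have hcard : ({τ, p2, q} : Finset V).card = 3 := by
    rw [Finset.card_insert_of_notMem (by simp [hτp2, hτq]),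
        Finset.card_insert_of_notMem (by simp [hp2q])]
    simp
  calc 3 = ({τ, p2, q} : Finset V).card := hcard.symm
    _ ≤ _ := Finset.card_le_card hsub
end

section
/- Among the Dynkin diagrams $A_n$ ($n\ge 2$), $D_{2n}$ ($n\ge 2$), $E_6$, $E_8$, viewed as bipartite graphs with distinguished endpoint vertex $*$, exactly $A_2$, $A_3$, $A_5$, $D_4$, $D_6$ satisfy the property that for every vertex $b$ at odd distance from $*$ there exists a vertex $\tau$ at even distance from $*$ whose only neighbor is $b$. -/
/-- The property of Theorem 2.1: every vertex at odd distance from the base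
vertex `s` has a neighbor at even distance whose only neighbor it is. -/
def dynkinProp {V : Type*} (G : SimpleGraph V) (s : V) : Prop :=
  ∀ b, Odd (G.dist s b) →
    ∃ τ, Even (G.dist s τ) ∧ G.Adj τ b ∧ ∀ c, G.Adj τ c → c = b

/-- The Dynkin diagram `Aₙ`: a path on `n` vertices `0, 1, …, n-1`. -/
def dynkinA (n : ℕ) : SimpleGraph (Fin n) :=
  SimpleGraph.fromRel (fun i j => (i : ℕ) + 1 = (j : ℕ))

/-- The Dynkin diagram `Dₘ`: a path `0 - 1 - ⋯ - (m-2)` together with a fork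
edge `(m-3) - (m-1)`. -/
def dynkinD (m : ℕ) : SimpleGraph (Fin m) :=
  SimpleGraph.fromRel (fun i j =>
    ((i : ℕ) + 1 = (j : ℕ) ∧ (j : ℕ) ≤ m - 2) ∨ ((i : ℕ) = m - 3 ∧ (j : ℕ) = m - 1))

/-- The Dynkin diagram `E₆`: a path `0 - 1 - 2 - 3 - 4` with a branch `2 - 5`. -/
def dynkinE6 : SimpleGraph (Fin 6) :=
  SimpleGraph.fromRel (fun i j =>
    ((i : ℕ) + 1 = (j : ℕ) ∧ (j : ℕ) ≤ 4) ∨ ((i : ℕ) = 2 ∧ (j : ℕ) = 5))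

/-- The Dynkin diagram `E₈`: a path `0 - 1 - ⋯ - 6` with a branch `4 - 7`. -/
def dynkinE8 : SimpleGraph (Fin 8) :=
  SimpleGraph.fromRel (fun i j =>
    ((i : ℕ) + 1 = (j : ℕ) ∧ (j : ℕ) ≤ 6) ∨ ((i : ℕ) = 4 ∧ (j : ℕ) = 7))


open SimpleGraph

section helpers
variable {V : Type*} {G : SimpleGraph V}

lemma walk_len_ge (f : V → ℕ)
    (hadj : ∀ u v, G.Adj u v → ((f u : ℤ) - f v).natAbs ≤ 1) :
    ∀ {a b : V} (p : G.Walk a b), ((f a : ℤ) - f b).natAbs ≤ p.length := by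
  intro a b p
  induction p with
  | nil => simp
  | cons h p ih =>
    rename_i u v w
    have h1 := hadj u v h
    simp only [SimpleGraph.Walk.length_cons]
    omega

/-- If `f` is a "distance-like" function then `G.dist a v = f v`. -/
lemma dist_eq_of (f : V → ℕ) (a : V)
    (ha : f a = 0) (h0 : ∀ v, f v = 0 → v = a)
    (hstep : ∀ v, f v ≠ 0 → ∃ u, G.Adj u v ∧ f u + 1 = f v)
    (hadj : ∀ u v, G.Adj u v → ((f u : ℤ) - f v).natAbs ≤ 1) :
    ∀ v, G.dist a v = f v := by
  have key : ∀ k (v : V), f v = k → ∃ p : G.Walk a v, p.length = f v := by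
    intro k
    induction k with
    | zero =>
      intro v hv
      have := h0 v hv; subst this
      exact ⟨SimpleGraph.Walk.nil, by simp [hv]⟩
    | succ k ih =>
      intro v hv
      obtain ⟨u, hu, hfu⟩ := hstep v (by omega)
      obtain ⟨p, hp⟩ := ih u (by omega)
      exact ⟨p.concat hu, by simp [hp, hfu]⟩
  intro v
  obtain ⟨p, hp⟩ := key (f v) v rfl
  refine le_antisymm (hp ▸ SimpleGraph.dist_le p) ?_
  obtain ⟨q, hq⟩ := (SimpleGraph.Reachable.exists_walk_length_eq_dist ⟨p⟩ : _)
  have := walk_len_ge f hadj q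
  omega

lemma prop_iff {s : V} (f : V → ℕ) (hd : ∀ v, G.dist s v = f v) :
    dynkinProp G s ↔
      ∀ b, Odd (f b) → ∃ τ, Even (f τ) ∧ G.Adj τ b ∧ ∀ c, G.Adj τ c → c = b := by
  unfold dynkinProp; simp_rw [hd]

end helpers

instance (n : ℕ) : DecidableRel (dynkinA n).Adj := fun a b =>
  decidable_of_iff _ (SimpleGraph.fromRel_adj _ a b).symm

instance (m : ℕ) : DecidableRel (dynkinD m).Adj := fun a b =>
  decidable_of_iff _ (SimpleGraph.fromRel_adj _ a b).symm

instance : DecidableRel dynkinE6.Adj := fun a b =>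
  decidable_of_iff _ (SimpleGraph.fromRel_adj _ a b).symm

instance : DecidableRel dynkinE8.Adj := fun a b =>
  decidable_of_iff _ (SimpleGraph.fromRel_adj _ a b).symm

lemma adjA {n : ℕ} (u v : Fin n) :
    (dynkinA n).Adj u v ↔ ((u : ℕ) + 1 = v ∨ (v : ℕ) + 1 = u) := by
  simp only [dynkinA, SimpleGraph.fromRel_adj, ne_eq, Fin.ext_iff]
  omega

lemma adjD {m : ℕ} (u v : Fin m) :
    (dynkinD m).Adj u v ↔ (u : ℕ) ≠ (v : ℕ) ∧
      ((((u : ℕ) + 1 = v ∧ (v : ℕ) ≤ m - 2) ∨ ((u : ℕ) = m - 3 ∧ (v : ℕ) = m - 1)) ∨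
       (((v : ℕ) + 1 = u ∧ (u : ℕ) ≤ m - 2) ∨ ((v : ℕ) = m - 3 ∧ (u : ℕ) = m - 1))) := by
  simp only [dynkinD, SimpleGraph.fromRel_adj, ne_eq, Fin.ext_iff]

lemma distA (n : ℕ) (hn : 0 < n) :
    ∀ v : Fin n, (dynkinA n).dist ⟨0, hn⟩ v = v.val := by
  apply dist_eq_of
  · rfl
  · intro v hv; exact Fin.ext hv
  · intro v hv
    refine ⟨⟨v.val - 1, by omega⟩, ?_, ?_⟩
    · rw [adjA]; simp only [Fin.val_mk]; omega
    · simp only [Fin.val_mk]; omega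
  · intro u v huv; rw [adjA] at huv; omega

lemma distD (n : ℕ) (hn : 2 ≤ n) :
    ∀ v : Fin (2 * n), (dynkinD (2 * n)).dist ⟨0, Nat.mul_pos two_pos (Nat.lt_of_lt_of_le two_pos hn)⟩ v = min v.val (2 * n - 2) := by
  apply dist_eq_of
  · simp
  · intro v hv
    apply Fin.ext
    simp only [Fin.val_mk]
    omega
  · intro v hv
    rcases le_or_gt v.val (2 * n - 2) with hle | hgt
    · refine ⟨⟨v.val - 1, by omega⟩, ?_, ?_⟩
      · rw [adjD]; simp only [Fin.val_mk]; omega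
      · simp only [Fin.val_mk]; omega
    · have hv' : v.val = 2 * n - 1 := by have := v.isLt; omega
      refine ⟨⟨2 * n - 3, by omega⟩, ?_, ?_⟩
      · rw [adjD]; exact ⟨by simp only [Fin.val_mk]; omega, Or.inl (Or.inr ⟨rfl, hv'⟩)⟩
      · simp only [Fin.val_mk]; omega
  · intro u v huv; rw [adjD] at huv; omega

lemma distE6 : ∀ v : Fin 6, dynkinE6.dist 0 v = ![0, 1, 2, 3, 4, 3] v :=
  dist_eq_of _ 0 (by decide) (by decide) (by decide) (by decide)

lemma distE8 : ∀ v : Fin 8, dynkinE8.dist 0 v = ![0, 1, 2, 3, 4, 5, 6, 5] v :=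
  dist_eq_of _ 0 (by decide) (by decide) (by decide) (by decide)

/-- Among `Aₙ` (`n ≥ 2`), `D_{2n}` (`n ≥ 2`), `E₆`, `E₈`, with base vertex the
end `0` of the long tail, exactly `A₂`, `A₃`, `A₅`, `D₄`, `D₆` satisfy the
property of Theorem 2.1. -/
theorem stmt_9 :
    (∀ n : ℕ, (h : 2 ≤ n) →
      (dynkinProp (dynkinA n) ⟨0, by omega⟩ ↔ n = 2 ∨ n = 3 ∨ n = 5)) ∧
    (∀ n : ℕ, (h : 2 ≤ n) →
      (dynkinProp (dynkinD (2 * n)) ⟨0, by omega⟩ ↔ n = 2 ∨ n = 3)) ∧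
    ¬ dynkinProp dynkinE6 0 ∧
    ¬ dynkinProp dynkinE8 0 := by
  refine ⟨?_, ?_, ?_, ?_⟩
  · -- A_n
    intro n hn
    constructor
    · intro hp
      by_contra hne
      push_neg at hne
      obtain ⟨hne2, hne3, hne5⟩ := hne
      have h4 : 4 ≤ n := by omega
      have hodd : Odd ((dynkinA n).dist ⟨0, by omega⟩ ⟨3, by omega⟩) := by
        rw [distA n (by omega) ⟨3, by omega⟩]
        exact ⟨1, rfl⟩
      obtain ⟨τ, -, hadj, huniq⟩ := hp ⟨3, by omega⟩ hodd
      rw [adjA] at hadj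
      simp only [Fin.val_mk] at hadj
      rcases hadj with h2 | h4'
      · -- τ.val = 2
        have hc := huniq ⟨1, by omega⟩ (by
          rw [adjA]; simp only [Fin.val_mk]; omega)
        have : (1 : ℕ) = 3 := congrArg Fin.val hc
        omega
      · -- τ.val = 4, so n ≥ 5, hence n ≥ 6
        have h6 : 6 ≤ n := by have := τ.isLt; omega
        have hc := huniq ⟨5, by omega⟩ (by
          rw [adjA]; simp only [Fin.val_mk]; omega)
        have : (5 : ℕ) = 3 := congrArg Fin.val hc
        omega
    · rintro (rfl | rfl | rfl)
      · exact (prop_iff (fun v : Fin 2 => v.val) (distA 2 (by omega))).mpr (by decide)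
      · exact (prop_iff (fun v : Fin 3 => v.val) (distA 3 (by omega))).mpr (by decide)
      · exact (prop_iff (fun v : Fin 5 => v.val) (distA 5 (by omega))).mpr (by decide)
  · -- D_{2n}
    intro n hn
    constructor
    · intro hp
      by_contra hne
      push_neg at hne
      obtain ⟨hne2, hne3⟩ := hne
      have h4 : 4 ≤ n := by omega
      have hodd : Odd ((dynkinD (2 * n)).dist ⟨0, by omega⟩ ⟨3, by omega⟩) := by
        rw [distD n (by omega) ⟨3, by omega⟩]
        simp only [Fin.val_mk]
        have : min 3 (2 * n - 2) = 3 := by omega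
        rw [this]
        exact ⟨1, rfl⟩
      obtain ⟨τ, -, hadj, huniq⟩ := hp ⟨3, by omega⟩ hodd
      rw [adjD] at hadj
      simp only [Fin.val_mk] at hadj
      have hτ : τ.val = 2 ∨ τ.val = 4 := by omega
      rcases hτ with h2 | h4'
      · have hc := huniq ⟨1, by omega⟩ (by
          rw [adjD]; simp only [Fin.val_mk]; omega)
        have : (1 : ℕ) = 3 := congrArg Fin.val hc
        omega
      · have hc := huniq ⟨5, by omega⟩ (by
          rw [adjD]; simp only [Fin.val_mk]; omega)
        have : (5 : ℕ) = 3 := congrArg Fin.val hc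
        omega
    · rintro (rfl | rfl)
      · exact (prop_iff (fun v : Fin (2 * 2) => min v.val (2 * 2 - 2))
          (distD 2 (by omega))).mpr (by decide)
      · exact (prop_iff (fun v : Fin (2 * 3) => min v.val (2 * 3 - 2))
          (distD 3 (by omega))).mpr (by decide)
  · rw [prop_iff ![0, 1, 2, 3, 4, 3] distE6]; decide
  · rw [prop_iff ![0, 1, 2, 3, 4, 5, 6, 5] distE8]; decide
end

section
/- Let $T = \{0, 2, 4, \dots, 2n-2\}$ with fusion multiplicities $N_{jk}^l$ inherited from the $SU(2)_{2n-1}$ fusion ring. Then in the 'doubled' system with objects $(j,k) \in T \times T$, an element $(j,k)$ satisfies: the product $(j,k)$ with itself contains the unit $(0,0)$ with multiplicity 1 and $(j,k)$ has the same dimension as the object $2$ if and only if $(j,k) \in \{(2,0), (0,2)\}$, for $n > 1$, where dimension of $(j,k)$ is $d_j d_k$ with $d_j = \sin((j+1)\pi/(2n+1))/\sin(\pi/(2n+1))$. -/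
open Real

set_option maxHeartbeats 1000000 in
/-- In the doubled system of the even part of `A_{2n}` (quantum dimensions of
`SU(2)_{2n-1}`), an object `(j,k)` with `j, k` even in `[0, 2n-2]` has the same
dimension as the object `2` iff `(j,k) = (2,0)` or `(0,2)`. -/
theorem stmt_16 (n : ℕ) (hn : 1 < n)
    (d : ℕ → ℝ)
    (hd : ∀ j, d j = sin ((j + 1) * π / (2 * n + 1)) / sin (π / (2 * n + 1)))
    (j k : ℕ) (hje : Even j) (hke : Even k)
    (hj : j ≤ 2 * n - 2) (hk : k ≤ 2 * n - 2) :
    d j * d k = d 2 ↔ (j, k) = (2, 0) ∨ (j, k) = (0, 2) := by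
  have hn2 : (2:ℝ) ≤ (n:ℝ) := by exact_mod_cast hn
  set x : ℝ := π / (2 * n + 1) with hxdef
  have hNpos : (0:ℝ) < 2 * (n:ℝ) + 1 := by linarith
  have hx0 : 0 < x := div_pos pi_pos hNpos
  have hpi : π = (2 * (n:ℝ) + 1) * x := by rw [hxdef]; field_simp
  have hd' : ∀ m : ℕ, d m = sin (((m:ℝ) + 1) * x) / sin x := by
    intro m; rw [hd m, mul_div_assoc]
  have hsp : ∀ t : ℝ, 0 < t → t ≤ 2 * (n:ℝ) → 0 < sin (t * x) := by
    intro t ht ht'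
    apply sin_pos_of_pos_of_lt_pi (by positivity)
    rw [hpi]; nlinarith
  have hs1 : 0 < sin x := by
    have := hsp 1 one_pos (by linarith)
    simpa using this
  have hs2pos : 0 < sin (2*x) := hsp 2 two_pos (by linarith)
  have hs3pos : 0 < sin (3*x) := hsp 3 three_pos (by linarith)
  have hc2 : 0 < cos (2*x) := by
    apply cos_pos_of_mem_Ioo
    constructor
    · nlinarith [pi_pos]
    · nlinarith [pi_pos, hpi, hx0]
  have h31 : sin x < sin (3*x) := by
    have h3 := sin_three_mul x
    have hct := cos_two_mul x
    have hsq := sin_sq_add_cos_sq x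
    nlinarith [mul_pos hs1 hc2]
  -- concavity lower bound
  have hmin : ∀ m : ℕ, 2 ≤ m → m ≤ 2*n - 2 →
      min (sin (3*x)) (sin (2*x)) ≤ sin (((m:ℝ)+1) * x) := by
    intro m hm2 hm
    have hm' : m + 2 ≤ 2 * n := by omega
    have hmr : (m:ℝ) + 2 ≤ 2 * (n:ℝ) := by exact_mod_cast hm'
    have hmr2 : (2:ℝ) ≤ (m:ℝ) := by exact_mod_cast hm2
    have huv : 3*x ≤ π - 2*x := by rw [hpi]; nlinarith
    have hu : 3*x ∈ Set.Icc (0:ℝ) π := ⟨by positivity, by rw [hpi]; nlinarith⟩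
    have hv : π - 2*x ∈ Set.Icc (0:ℝ) π := ⟨by rw [hpi]; nlinarith, by nlinarith⟩
    have hz : ((m:ℝ)+1) * x ∈ segment ℝ (3*x) (π - 2*x) := by
      rw [segment_eq_Icc huv]
      exact ⟨by nlinarith, by rw [hpi]; nlinarith⟩
    have := strictConcaveOn_sin_Icc.concaveOn.ge_on_segment hu hv hz
    rwa [sin_pi_sub] at this
  -- sine injectivity on our range
  have hinj : ∀ m : ℕ, Even m → m ≤ 2*n - 2 →
      sin (((m:ℝ)+1) * x) = sin (3*x) → m = 2 := by
    intro m hme hm hs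
    have hm' : m + 2 ≤ 2 * n := by omega
    have hmr : (m:ℝ) + 2 ≤ 2 * (n:ℝ) := by exact_mod_cast hm'
    have hub : ((m:ℝ)+1) * x < π := by rw [hpi]; nlinarith
    have hlb : 0 < ((m:ℝ)+1) * x := by positivity
    have h3ub : 3*x < π := by rw [hpi]; nlinarith
    rw [Real.sin_eq_sin_iff] at hs
    obtain ⟨l, hl | hl⟩ := hs
    · -- 3x = 2lπ + (m+1)x
      have hl1 : 2*(l:ℝ) < 1 := by nlinarith [pi_pos]
      have hl2 : (-1:ℝ) < 2*(l:ℝ) := by nlinarith [pi_pos]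
      have hl0 : l = 0 := by
        have b1 : 2*l < 1 := by exact_mod_cast hl1
        have b2 : -1 < 2*l := by exact_mod_cast hl2
        omega
      subst hl0
      have : ((m:ℝ)+1) * x = 3 * x := by push_cast at hl; linarith
      have hm3 : (m:ℝ) + 1 = 3 := mul_right_cancel₀ hx0.ne' this
      have : (m:ℝ) = 2 := by linarith
      exact_mod_cast this
    · -- 3x = (2l+1)π - (m+1)x
      exfalso
      have hl1 : 2*(l:ℝ) + 1 < 2 := by nlinarith [pi_pos]
      have hl2 : (0:ℝ) < 2*(l:ℝ) + 1 := by nlinarith [pi_pos]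
      have hl0 : l = 0 := by
        have b1 : 2*l + 1 < 2 := by exact_mod_cast hl1
        have b2 : (0:ℤ) < 2*l + 1 := by exact_mod_cast hl2
        omega
      subst hl0
      push_cast at hl
      rw [hpi] at hl
      have hme' : ((m:ℝ)+1) = (2*(n:ℝ)+1) - 3 := by
        have := mul_right_cancel₀ (b := x) hx0.ne' (by linarith [hl] : ((m:ℝ)+1) * x = ((2*(n:ℝ)+1) - 3) * x)
        exact this
      have : (m:ℕ) + 3 = 2 * n := by
        have : (m:ℝ) + 3 = 2*(n:ℝ) := by linarith
        exact_mod_cast this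
      obtain ⟨r, rfl⟩ := hme
      omega
  have hd0 : d 0 = 1 := by
    rw [hd' 0]; push_cast; rw [zero_add, one_mul, div_self hs1.ne']
  constructor
  · intro h
    by_cases hj0 : j = 0
    · subst hj0
      rw [hd0, one_mul, hd' k, hd' 2, show ((2:ℕ):ℝ)+1 = 3 by norm_num,
        div_eq_div_iff hs1.ne' hs1.ne'] at h
      have hk2 := hinj k hke hk (mul_right_cancel₀ hs1.ne' h)
      subst hk2
      right; rfl
    · by_cases hk0 : k = 0
      · subst hk0
        rw [hd0, mul_one, hd' j, hd' 2, show ((2:ℕ):ℝ)+1 = 3 by norm_num,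
          div_eq_div_iff hs1.ne' hs1.ne'] at h
        have hj2 := hinj j hje hj (mul_right_cancel₀ hs1.ne' h)
        subst hj2
        left; rfl
      · exfalso
        have hj2 : 2 ≤ j := by rcases hje with ⟨r, rfl⟩; omega
        have hk2 : 2 ≤ k := by rcases hke with ⟨r, rfl⟩; omega
        have hjm := hmin j hj2 hj
        have hkm := hmin k hk2 hk
        have hjp : 0 < sin (((j:ℝ)+1)*x) := by
          apply hsp _ (by positivity)
          have h2 : j + 2 ≤ 2*n := by omega
          have := (Nat.cast_le (α := ℝ)).2 h2
          push_cast at this; linarith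
        have hmp : 0 < min (sin (3*x)) (sin (2*x)) := lt_min hs3pos hs2pos
        have key : sin (2*x) * sin (2*x) - sin (3*x) * sin x = sin x * sin x := by
          rw [sin_two_mul, sin_three_mul]
          have hsq := sin_sq_add_cos_sq x
          nlinarith [hsq]
        have hmm : sin (3*x) * sin x < min (sin (3*x)) (sin (2*x)) * min (sin (3*x)) (sin (2*x)) := by
          rcases min_cases (sin (3*x)) (sin (2*x)) with ⟨he, _⟩ | ⟨he, _⟩ <;> rw [he]
          · nlinarith [mul_pos hs3pos (sub_pos.mpr h31)]
          · nlinarith [mul_pos hs1 hs1]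
        have hprod : sin (3*x) * sin x < sin (((j:ℝ)+1)*x) * sin (((k:ℝ)+1)*x) :=
          lt_of_lt_of_le hmm (mul_le_mul hjm hkm hmp.le hjp.le)
        rw [hd' j, hd' k, hd' 2, show ((2:ℕ):ℝ)+1 = 3 by norm_num,
          div_mul_div_comm, div_eq_div_iff (by positivity) hs1.ne'] at h
        nlinarith [mul_lt_mul_of_pos_right hprod hs1, hs1]
  · rintro (h | h) <;> injection h with h1 h2 <;> subst h1 <;> subst h2
    · rw [hd0, mul_one]
    · rw [hd0, one_mul]
end
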